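/- Let ⟨K,B,P,N⟩_R be a DPI, D a set of minimal diagnoses w.r.t. it, and P_k = ⟨dx_k, dnx_k, ∅⟩ a partition of D with dx_k ≠ ∅, dnx_k ≠ ∅ and U_{dx_k} ⊊ U_D. Then P_k is a canonical q-partition if and only if (1) D_i \ U_{dx_k} = ∅ for all D_i ∈ dx_k and (2) D_i \ U_{dx_k} ≠ ∅ for all D_i ∈ dnx_k (i.e., every diagnosis in dnx_k has a nonempty trait w.r.t. P_k). -/

import Mathlib

namespace KBDDiag

/-- A diagnosis problem instance (DPI) `⟨K,B,P,N⟩_R` over a Tarskian logic on sentences `L`. -/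
structure DPI (L : Type*) where
  /-- the entailment relation of the logic -/
  entails : Set L → L → Prop
  /-- entailment is monotonic -/
  entails_mono : ∀ (X Y : Set L) (α : L), entails X α → entails (X ∪ Y) α
  /-- entailment is idempotent -/
  entails_idem : ∀ (X A : Set L) (β : L),
    (∀ α ∈ A, entails X α) → entails (X ∪ A) β → entails X β
  /-- entailment is extensive -/
  entails_ext : ∀ (X : Set L) (α : L), α ∈ X → entails X α
  /-- the (possibly faulty) KB -/
  K : Set L
  /-- the background KB -/
  B : Set L
  /-- the positive test cases -/
  P : Set (Set L)
  /-- the negative test cases -/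
  N : Set (Set L)
  /-- requirements: `r X` means the KB `X` satisfies requirement `r` -/
  R : Set (Set L → Prop)
  K_finite : K.Finite
  B_finite : B.Finite
  K_B_disjoint : K ∩ B = ∅
  P_finite : P.Finite
  P_mem_finite : ∀ p ∈ P, Set.Finite p
  N_finite : N.Finite
  N_mem_finite : ∀ n ∈ N, Set.Finite n
  /-- violation of a requirement is monotone -/
  viol_mono : ∀ r ∈ R, ∀ X Y : Set L, X ⊆ Y → ¬ r X → ¬ r Y
  /-- requirements are preserved under adding entailed sentences -/
  sat_entailed : ∀ r ∈ R, ∀ X A : Set L, r X → (∀ α ∈ A, entails X α) → r (X ∪ A)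
  /-- the background KB satisfies every requirement -/
  B_sat : ∀ r ∈ R, r B

namespace DPI

variable {L : Type*} (d : DPI L)

/-- `X ⊨ Y` : X entails every sentence of Y. -/
def EntailsAll (X Y : Set L) : Prop := ∀ α ∈ Y, d.entails X α

/-- `U_P`, the union of all positive test cases. -/
def UP : Set L := ⋃₀ d.P

/-- `Ks` is a solution KB w.r.t. the DPI. -/
def IsSolutionKB (Ks : Set L) : Prop :=
  (∀ r ∈ d.R, r (Ks ∪ d.B)) ∧
  (∀ p ∈ d.P, d.EntailsAll (Ks ∪ d.B) p) ∧
  (∀ n ∈ d.N, ¬ d.EntailsAll (Ks ∪ d.B) n)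

/-- `D` is a diagnosis w.r.t. the DPI. -/
def IsDiagnosis (D : Set L) : Prop :=
  D ⊆ d.K ∧ d.IsSolutionKB ((d.K \ D) ∪ d.UP)

/-- `D` is a minimal diagnosis w.r.t. the DPI. -/
def IsMinDiagnosis (D : Set L) : Prop :=
  d.IsDiagnosis D ∧ ∀ D' ⊂ D, ¬ d.IsDiagnosis D'

/-- `C` is a conflict w.r.t. the DPI. -/
def IsConflict (C : Set L) : Prop :=
  C ⊆ d.K ∧ ¬ d.IsSolutionKB (C ∪ d.UP)

/-- `C` is a minimal conflict w.r.t. the DPI. -/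
def IsMinConflict (C : Set L) : Prop :=
  d.IsConflict C ∧ ∀ C' ⊂ C, ¬ d.IsConflict C'

/-- `Ks` is a maximal solution KB w.r.t. the DPI. -/
def IsMaxSolutionKB (Ks : Set L) : Prop :=
  d.IsSolutionKB Ks ∧ ¬ ∃ K' : Set L, d.IsSolutionKB K' ∧ Ks ∩ d.K ⊂ K' ∩ d.K

/-- `K*_i = (K \ D_i) ∪ B ∪ U_P`. -/
def Kstar (Di : Set L) : Set L := (d.K \ Di) ∪ d.B ∪ d.UP

/-- `X` violates some requirement in `R` or entails some negative test case. -/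
def Violates (X : Set L) : Prop :=
  (∃ r ∈ d.R, ¬ r X) ∨ (∃ n ∈ d.N, d.EntailsAll X n)

/-- `dx(X)` w.r.t. the leading diagnoses `Ds`. -/
def dxS (Ds : Set (Set L)) (X : Set L) : Set (Set L) :=
  {Di ∈ Ds | d.EntailsAll (d.Kstar Di) X}

/-- `dnx(X)` w.r.t. the leading diagnoses `Ds`. -/
def dnxS (Ds : Set (Set L)) (X : Set L) : Set (Set L) :=
  {Di ∈ Ds | d.Violates (d.Kstar Di ∪ X)}

/-- `dz(X)` w.r.t. the leading diagnoses `Ds`. -/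
def dzS (Ds : Set (Set L)) (X : Set L) : Set (Set L) :=
  Ds \ (d.dxS Ds X ∪ d.dnxS Ds X)

/-- `Q` is a query w.r.t. the leading diagnoses `Ds`. -/
def IsQuery (Ds : Set (Set L)) (Q : Set L) : Prop :=
  Q.Nonempty ∧ (d.dxS Ds Q).Nonempty ∧ (d.dnxS Ds Q).Nonempty

/-- The canonical query `Q_can(S) = (K \ U_S) ∩ (U_D \ I_D)` w.r.t. the seed `S`. -/
def Qcan (Ds S : Set (Set L)) : Set L := (d.K \ ⋃₀ S) ∩ (⋃₀ Ds \ ⋂₀ Ds)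

/-- `⟨dxp, dnxp, ∅⟩` is a canonical q-partition of `Ds`. -/
def IsCanonicalQPartition (Ds dxp dnxp : Set (Set L)) : Prop :=
  dxp ∪ dnxp = Ds ∧ dxp ∩ dnxp = ∅ ∧
  dxp.Nonempty ∧ dxp ⊂ Ds ∧
  (d.Qcan Ds dxp).Nonempty ∧
  d.dxS Ds (d.Qcan Ds dxp) = dxp ∧
  d.dnxS Ds (d.Qcan Ds dxp) = dnxp ∧
  d.dzS Ds (d.Qcan Ds dxp) = ∅

end DPI

/-- `Disc_D = U_D \ I_D`, the discrimination sentences w.r.t. `Ds`. -/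
def Disc {L : Type*} (Ds : Set (Set L)) : Set L := ⋃₀ Ds \ ⋂₀ Ds

/-- `H` is a hitting set of the collection `S`. -/
def IsHittingSet {α : Type*} (S : Set (Set α)) (H : Set α) : Prop :=
  H ⊆ ⋃₀ S ∧ ∀ s ∈ S, (H ∩ s).Nonempty

/-- `H` is a minimal hitting set of the collection `S`. -/
def IsMinHittingSet {α : Type*} (S : Set (Set α)) (H : Set α) : Prop :=
  IsHittingSet S H ∧ ∀ H' ⊂ H, ¬ IsHittingSet S H'

/-- `MHS S`, the set of all minimal hitting sets of `S`. -/
def MHS {α : Type*} (S : Set (Set α)) : Set (Set α) :=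
  {H | IsMinHittingSet S H}

end KBDDiag

/-! For a seed `S` of minimal diagnoses, a diagnosis `D_i ⊆ U_S` has `Q_can(S) ⊆ K \ D_i ⊆ K*_i`,
so it lies in `dx`. Otherwise its trait `D_i \ U_S` is a nonempty part of both `D_i` and
`Q_can(S)`; adding `Q_can(S)` to `K*_i` thus puts back part of the minimal diagnosis `D_i`, which
makes `K*_i ∪ Q_can(S)` faulty, so `D_i` lies in `dnx`. Hence `Q_can(S)` has the q-partition
`⟨{D_i | D_i ⊆ U_S}, {D_i | D_i ⊈ U_S}, ∅⟩`, which is `⟨dx_k, dnx_k, ∅⟩` for `S = dx_k` exactly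
when every diagnosis of `dnx_k` has a nonempty trait. -/

theorem Set.sep_eq_left_iff_of_partition {α : Type*} {s t u : Set α} {p : α → Prop}
    (hstu : s ∪ t = u) (hst : s ∩ t = ∅) (hs : ∀ x ∈ s, p x) :
    {x ∈ u | p x} = s ↔ ∀ x ∈ t, ¬ p x := by
  subst hstu
  constructor
  · intro h x hxt hpx
    have hxs : x ∈ s := h ▸ ⟨Or.inr hxt, hpx⟩
    exact (Set.eq_empty_iff_forall_notMem.1 hst) x ⟨hxs, hxt⟩
  · intro ht
    ext x
    constructor
    · rintro ⟨hxs | hxt, hpx⟩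
      exacts [hxs, absurd hpx (ht x hxt)]
    · exact fun hxs => ⟨Or.inl hxs, hs x hxs⟩

theorem Set.sep_not_eq_right_of_partition {α : Type*} {s t u : Set α} {p : α → Prop}
    (hstu : s ∪ t = u) (hs : ∀ x ∈ s, p x) (ht : ∀ x ∈ t, ¬ p x) :
    {x ∈ u | ¬ p x} = t := by
  subst hstu
  ext x
  constructor
  · rintro ⟨hxs | hxt, hpx⟩
    exacts [absurd (hs x hxs) hpx, hxt]
  · exact fun hxt => ⟨Or.inr hxt, ht x hxt⟩

namespace KBDDiag

namespace DPI

variable {L : Type*} (d : DPI L)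

theorem entailsAll_of_subset {X Y : Set L} (h : Y ⊆ X) : d.EntailsAll X Y :=
  fun α hα => d.entails_ext X α (h hα)

theorem violates_mono {X Y : Set L} (h : X ⊆ Y) (hX : d.Violates X) : d.Violates Y := by
  rcases hX with ⟨r, hr, hrX⟩ | ⟨n, hn, hnX⟩
  · exact .inl ⟨r, hr, d.viol_mono r hr X Y h hrX⟩
  · refine .inr ⟨n, hn, fun α hα => ?_⟩
    simpa only [Set.union_eq_self_of_subset_left h] using d.entails_mono X Y α (hnX α hα)

theorem kstar_eq_union (Di : Set L) : d.Kstar Di = (d.K \ Di ∪ d.UP) ∪ d.B :=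
  Set.union_right_comm _ _ _

theorem not_violates_of_isSolutionKB {S Q : Set L} (hS : d.IsSolutionKB S)
    (hQ : d.EntailsAll (S ∪ d.B) Q) : ¬ d.Violates (S ∪ d.B ∪ Q) := by
  rintro (⟨r, hr, hrSQ⟩ | ⟨n, hn, hnSQ⟩)
  · exact hrSQ (d.sat_entailed r hr _ Q (hS.1 r hr) hQ)
  · exact hS.2.2 n hn fun β hβ => d.entails_idem _ Q β hQ (hnSQ β hβ)

theorem violates_of_not_isSolutionKB {S : Set L} (hS : d.UP ⊆ S) (h : ¬ d.IsSolutionKB S) :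
    d.Violates (S ∪ d.B) := by
  by_contra hv
  refine h ⟨fun r hr => ?_, fun p hp => d.entailsAll_of_subset ?_,
    fun n hn hnS => hv (.inr ⟨n, hn, hnS⟩)⟩
  · by_contra hrS
    exact hv (.inl ⟨r, hr, hrS⟩)
  · exact (Set.subset_sUnion_of_mem hp).trans (hS.trans Set.subset_union_left)

theorem not_violates_kstar_union {Di Q : Set L} (hDi : d.IsDiagnosis Di)
    (hQ : d.EntailsAll (d.Kstar Di) Q) : ¬ d.Violates (d.Kstar Di ∪ Q) := by
  rw [kstar_eq_union] at hQ ⊢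
  exact d.not_violates_of_isSolutionKB hDi.2 hQ

/-- By minimality `D_i \ Q` is no diagnosis, and `K*_i ∪ Q` contains its repaired KB. -/
theorem violates_kstar_union {Di Q : Set L} (hDi : d.IsMinDiagnosis Di)
    (hQ : (Di ∩ Q).Nonempty) : d.Violates (d.Kstar Di ∪ Q) := by
  have hsmaller : ¬ d.IsDiagnosis (Di \ Q) := hDi.2 _ (Set.sdiff_ssubset_left_iff.2 hQ)
  have hviol := d.violates_of_not_isSolutionKB Set.subset_union_right
    fun h => hsmaller ⟨Set.sdiff_subset.trans hDi.1.1, h⟩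
  refine d.violates_mono ?_ hviol
  intro x hx
  simp only [Kstar, Set.mem_union, Set.mem_sdiff] at hx ⊢
  tauto

section CanonicalQuery

variable {Ds S : Set (Set L)}

theorem qcan_subset_diff {Di : Set L} (hDi : Di ⊆ ⋃₀ S) : d.Qcan Ds S ⊆ d.K \ Di :=
  fun _ hα => ⟨hα.1.1, fun h => hα.1.2 (hDi h)⟩

theorem diff_sUnion_subset_qcan (hS : S ⊆ Ds) (hSne : S.Nonempty) {Di : Set L} (hDi : Di ∈ Ds)
    (hDiK : Di ⊆ d.K) : Di \ ⋃₀ S ⊆ d.Qcan Ds S := by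
  obtain ⟨D0, hD0⟩ := hSne
  exact fun α hα => ⟨⟨hDiK hα.1, hα.2⟩, ⟨Di, hDi, hα.1⟩,
    fun hαI => hα.2 ⟨D0, hD0, hαI D0 (hS hD0)⟩⟩

variable (hDs : ∀ Di ∈ Ds, d.IsMinDiagnosis Di) (hS : S ⊆ Ds) (hSne : S.Nonempty)
include hDs hS hSne

theorem violates_kstar_union_qcan {Di : Set L} (hDi : Di ∈ Ds) (hDiS : ¬ Di ⊆ ⋃₀ S) :
    d.Violates (d.Kstar Di ∪ d.Qcan Ds S) := by
  obtain ⟨α, hα⟩ := Set.not_subset.1 hDiS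
  have hαQ := d.diff_sUnion_subset_qcan hS hSne hDi (hDs Di hDi).1.1 hα
  exact d.violates_kstar_union (hDs Di hDi) ⟨α, hα.1, hαQ⟩

theorem dxS_qcan : d.dxS Ds (d.Qcan Ds S) = {Di ∈ Ds | Di ⊆ ⋃₀ S} := by
  ext Di
  refine ⟨fun ⟨hDi, hent⟩ => ⟨hDi, by_contra fun hDiS => ?_⟩,
    fun ⟨hDi, hDiS⟩ => ⟨hDi, d.entailsAll_of_subset ?_⟩⟩
  · exact d.not_violates_kstar_union (hDs Di hDi).1 hent
      (d.violates_kstar_union_qcan hDs hS hSne hDi hDiS)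
  · exact (d.qcan_subset_diff hDiS).trans fun _ h => .inl (.inl h)

theorem dnxS_qcan : d.dnxS Ds (d.Qcan Ds S) = {Di ∈ Ds | ¬ Di ⊆ ⋃₀ S} := by
  ext Di
  refine ⟨fun ⟨hDi, hviol⟩ => ⟨hDi, fun hDiS => ?_⟩,
    fun hDi => ⟨hDi.1, d.violates_kstar_union_qcan hDs hS hSne hDi.1 hDi.2⟩⟩
  have hent : Di ∈ d.dxS Ds (d.Qcan Ds S) := (d.dxS_qcan hDs hS hSne).symm ▸ ⟨hDi, hDiS⟩
  exact d.not_violates_kstar_union (hDs Di hDi).1 hent.2 hviol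

theorem dzS_qcan : d.dzS Ds (d.Qcan Ds S) = ∅ := by
  rw [dzS, d.dxS_qcan hDs hS hSne, d.dnxS_qcan hDs hS hSne, ← Set.sep_or, Set.sdiff_eq_empty]
  exact fun Di hDi => ⟨hDi, em _⟩

end CanonicalQuery

end DPI

theorem statement13_general {L : Type*} (d : DPI L) (Ds : Set (Set L))
    (hDs : ∀ Di ∈ Ds, d.IsMinDiagnosis Di)
    (dxk dnxk : Set (Set L))
    (hpart : dxk ∪ dnxk = Ds) (hdisj : dxk ∩ dnxk = ∅)
    (hne1 : dxk.Nonempty) (hne2 : dnxk.Nonempty) :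
    d.IsCanonicalQPartition Ds dxk dnxk ↔
      ((∀ Di ∈ dxk, Di \ ⋃₀ dxk = ∅) ∧ (∀ Di ∈ dnxk, Di \ ⋃₀ dxk ≠ ∅)) := by
  have hS : dxk ⊆ Ds := hpart ▸ Set.subset_union_left
  have hdxk : ∀ Di ∈ dxk, Di ⊆ ⋃₀ dxk := fun _ => Set.subset_sUnion_of_mem
  have hdx_iff : d.dxS Ds (d.Qcan Ds dxk) = dxk ↔ ∀ Di ∈ dnxk, ¬ Di ⊆ ⋃₀ dxk := by
    rw [d.dxS_qcan hDs hS hne1]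
    exact Set.sep_eq_left_iff_of_partition hpart hdisj hdxk
  simp only [ne_eq, Set.sdiff_eq_empty]
  refine ⟨fun ⟨_, _, _, _, _, hdx, _⟩ => ⟨hdxk, hdx_iff.1 hdx⟩, fun ⟨_, hdnxk⟩ => ?_⟩
  obtain ⟨D0, hD0⟩ := hne2
  have hD0Ds : D0 ∈ Ds := hpart ▸ .inr hD0
  have hssub : dxk ⊂ Ds :=
    ⟨hS, fun h => (Set.eq_empty_iff_forall_notMem.1 hdisj) D0 ⟨h hD0Ds, hD0⟩⟩
  have hQne : (d.Qcan Ds dxk).Nonempty :=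
    (Set.nonempty_of_not_subset (hdnxk D0 hD0)).mono
      (d.diff_sUnion_subset_qcan hS hne1 hD0Ds (hDs D0 hD0Ds).1.1)
  refine ⟨hpart, hdisj, hne1, hssub, hQne, hdx_iff.2 hdnxk, ?_, d.dzS_qcan hDs hS hne1⟩
  rw [d.dnxS_qcan hDs hS hne1]
  exact Set.sep_not_eq_right_of_partition hpart hdxk hdnxk

/-- A partition `⟨dxk, dnxk, ∅⟩` of `Ds` with `dxk ≠ ∅ ≠ dnxk` and
`U_dxk ⊊ U_Ds` is a canonical q-partition iff every diagnosis in `dxk` has empty trait and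
every diagnosis in `dnxk` has nonempty trait. -/
theorem statement13 {L : Type*} (d : DPI L) (Ds : Set (Set L))
    (hDs : ∀ Di ∈ Ds, d.IsMinDiagnosis Di)
    (dxk dnxk : Set (Set L))
    (hpart : dxk ∪ dnxk = Ds) (hdisj : dxk ∩ dnxk = ∅)
    (hne1 : dxk.Nonempty) (hne2 : dnxk.Nonempty)
    (hU : ⋃₀ dxk ⊂ ⋃₀ Ds) :
    d.IsCanonicalQPartition Ds dxk dnxk ↔
      ((∀ Di ∈ dxk, Di \ ⋃₀ dxk = ∅) ∧ (∀ Di ∈ dnxk, Di \ ⋃₀ dxk ≠ ∅)) :=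
  statement13_general d Ds hDs dxk dnxk hpart hdisj hne1 hne2

end KBDDiag
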